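/- arXiv:1308.3728 — 5 statements merged into one kernel-verified Lean document; each statement's English description precedes it below -/
import Mathlib

section
/- Let D = (V,E) be an acyclic digraph. If Σ = (I-Λ)^{-T} Ω (I-Λ)^{-1} with Λ ∈ ℝ^E and Ω a diagonal matrix with positive diagonal entries, then Λ and Ω are uniquely determined by Σ: for each edge u → v, λ_{uv} equals the u-entry of the vector Σ_{v, pa(v)} (Σ_{pa(v), pa(v)})^{-1}, and ω_{vv} equals the Schur complement σ_{vv} − Σ_{v,pa(v)} (Σ_{pa(v),pa(v)})^{-1} Σ_{pa(v),v}. -/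
open Matrix BigOperators

def SupportedOn {V : Type} (E : V → V → Prop) (Λ : Matrix V V ℝ) : Prop :=
  ∀ u v, ¬ E u v → Λ u v = 0

def Acyclic {V : Type} (E : V → V → Prop) : Prop :=
  ∀ v, ¬ Relation.TransGen E v v

def cycAdj (p : ℕ) (i j : Fin p) : Prop :=
  (i.1 + 1) % p = j.1 ∨ (j.1 + 1) % p = i.1

structure Trek {V : Type} (E : V → V → Prop) (u v : V) where
  left : List V
  right : List V
  left_ne : left ≠ []
  right_ne : right ≠ []
  top_eq : left.head left_ne = right.head right_ne
  chain_left : List.Chain' E left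
  chain_right : List.Chain' E right
  last_left : left.getLast left_ne = u
  last_right : right.getLast right_ne = v

def Trek.top {V : Type} {E : V → V → Prop} {u v : V} (τ : Trek E u v) : V :=
  τ.left.head τ.left_ne

def edgeProd {V : Type} (Λ : Matrix V V ℝ) (l : List V) : ℝ :=
  ((l.zip l.tail).map fun p => Λ p.1 p.2).prod

def Trek.mono {V : Type} {E : V → V → Prop} {u v : V} (Λ Ω : Matrix V V ℝ)
    (τ : Trek E u v) : ℝ :=
  Ω τ.top τ.top * edgeProd Λ τ.left * edgeProd Λ τ.right

structure TrekSystem {V : Type} (E : V → V → Prop) {n : ℕ} (x y : Fin n → V) where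
  perm : Equiv.Perm (Fin n)
  trek : ∀ i, Trek E (x i) (y (perm i))

def TrekSystem.NoSided {V : Type} {E : V → V → Prop} {n : ℕ} {x y : Fin n → V}
    (S : TrekSystem E x y) : Prop :=
  ∀ i j, i ≠ j →
    (∀ a : V, ¬(a ∈ (S.trek i).left ∧ a ∈ (S.trek j).left)) ∧
    (∀ a : V, ¬(a ∈ (S.trek i).right ∧ a ∈ (S.trek j).right))

structure DWalk {U : Type} (E : U → U → Prop) (u v : U) where
  steps : List (Bool × U × U)
  ne : steps ≠ []
  first_eq : (steps.head ne).2.1 = u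
  last_eq : (steps.getLast ne).2.2 = v
  edge : ∀ s ∈ steps, (s.1 = true → E s.2.1 s.2.2) ∧ (s.1 = false → E s.2.2 s.2.1)
  chain : List.Chain' (fun s t : Bool × U × U => s.2.2 = t.2.1) steps

def stepPairOK {U : Type} (A : Set U) (s t : Bool × U × U) : Prop :=
  ((s.1 = true ∧ t.1 = false) → s.2.2 ∈ A) ∧ (¬(s.1 = true ∧ t.1 = false) → s.2.2 ∉ A)

def DWalk.DConn {U : Type} {E : U → U → Prop} {u v : U} (A : Set U)
    (w : DWalk E u v) : Prop :=
  List.Chain' (stepPairOK A) w.steps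

def topOf {U : Type} : List (Bool × U × U) → U → U
  | [], u => u
  | (d, a, _b) :: rest, _ => if d then a else topOf rest _b

def DWalk.top {U : Type} {E : U → U → Prop} {u v : U} (w : DWalk E u v) : U :=
  topOf w.steps u

def TopsA {U : Type} (E : U → U → Prop) (A : Set U) (u v : U) : Set U :=
  {t | ∃ w : DWalk E u v, w.DConn A ∧ w.top = t}

def anAvoid {U : Type} (E : U → U → Prop) (A : Set U) (x : U) : Set U :=
  {u | u ∉ A ∧ Relation.ReflTransGen (fun a b => E a b ∧ a ∉ A ∧ b ∉ A) u x}

def EA {U : Type} (E : U → U → Prop) (A : Set U) (n1 n2 : U) : Set (U × U) :=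
  {e | E e.1 e.2 ∧ e.1 ∈ TopsA E A n1 n2 ∧ e.2 ∈ anAvoid E A n1 ∧ e.2 ∉ TopsA E A n1 n2}

def IsProperPath {U : Type} (E : U → U → Prop) (A : Set U) (l : List U) : Prop :=
  l ≠ [] ∧ List.Chain' (fun a b => E a b ∧ a ∉ A) l

def DigraphCov {U : Type} [Fintype U] [DecidableEq U] (E : U → U → Prop) :
    Set (Matrix U U ℝ) :=
  {S | ∃ Λ Ω : Matrix U U ℝ, SupportedOn E Λ ∧ Ω.IsDiag ∧ (∀ u, 0 < Ω u u) ∧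
        S = ((1 - Λ)⁻¹)ᵀ * Ω * (1 - Λ)⁻¹}

def BSupported {V : Type} (B : SimpleGraph V) (Ω : Matrix V V ℝ) : Prop :=
  ∀ u v, u ≠ v → ¬ B.Adj u v → Ω u v = 0

def MixedCov {V : Type} [Fintype V] [DecidableEq V] (D : V → V → Prop)
    (B : SimpleGraph V) : Set (Matrix V V ℝ) :=
  {S | ∃ Λ Ω : Matrix V V ℝ, SupportedOn D Λ ∧ Ω.PosDef ∧ BSupported B Ω ∧
        S = ((1 - Λ)⁻¹)ᵀ * Ω * (1 - Λ)⁻¹}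

def StrictlyGaussianCausal {V : Type} [Fintype V] [DecidableEq V]
    (D : V → V → Prop) (B : SimpleGraph V) : Prop :=
  ∃ (U : Type) (iF : Fintype U) (iD : DecidableEq U) (ι : V ↪ U) (E : U → U → Prop),
    Acyclic E ∧
      (fun S : Matrix U U ℝ => S.submatrix ι ι) '' (@DigraphCov U iF iD E) = MixedCov D B

def Chordal {V : Type} (B : SimpleGraph V) : Prop :=
  ∀ n : ℕ, 4 ≤ n → ∀ f : ZMod n → V, Function.Injective f →
    (∀ i, B.Adj (f i) (f (i + 1))) →
    ∃ i j : ZMod n, j ≠ i + 1 ∧ i ≠ j + 1 ∧ i ≠ j ∧ B.Adj (f i) (f j)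

def ChainGraph {V : Type} (D : V → V → Prop) (B : SimpleGraph V) : Prop :=
  ¬ ∃ u v, D u v ∧ Relation.ReflTransGen (fun a b => D a b ∨ B.Adj a b) v u



/-!
A matrix supported on an acyclic digraph is nilpotent, so `N = (1 - Λ)⁻¹ = ∑ Λ ^ k` has unit
diagonal and `N v a = 0` whenever `a → v`. Multiplying `S = Nᵀ Ω N` on the left by `(1 - Λ)ᵀ`
gives `(1 - Λ)ᵀ S = Ω N`, whose `(v, a)` entry reads
`S v a - ∑_{u ∈ pa v} Λ u v * S u a = Ω v v * N v a`. For `a ∈ pa v` these are the normal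
equations `Λ_{pa v, v}ᵀ S_{pa v, pa v} = S_{v, pa v}`, uniquely solvable because `S` is positive
definite; for `a = v` they express `Ω v v` as the Schur complement.
-/

open Finset Relation

variable {V : Type} {E : V → V → Prop}

lemma Acyclic.exists_rank [Fintype V] (hE : Acyclic E) :
    ∃ f : V → ℕ, (∀ u v, E u v → f u < f v) ∧ ∀ v, f v < Fintype.card V := by
  classical
  refine ⟨fun v => #{u | TransGen E u v}, fun u v huv => card_lt_card ?_,
    fun v => card_lt_univ_of_notMem (x := v) (by simpa using hE v)⟩
  refine ⟨fun x hx => ?_, fun hsub => hE u ?_⟩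
  · simp only [mem_filter, mem_univ, true_and] at hx ⊢
    exact hx.tail huv
  · simpa using hsub (by simpa using TransGen.single huv)

namespace SupportedOn

variable [Fintype V] [DecidableEq V] {Λ : Matrix V V ℝ}

lemma pow_apply_eq_zero_of_lt (hΛ : SupportedOn E Λ) {f : V → ℕ}
    (hf : ∀ u v, E u v → f u < f v) {k : ℕ} {u v : V} (h : f v < f u + k) :
    (Λ ^ k) u v = 0 := by
  induction k generalizing v with
  | zero => exact Matrix.one_apply_ne (by rintro rfl; omega)
  | succ k ih =>
    rw [pow_succ, Matrix.mul_apply]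
    refine sum_eq_zero fun w _ => ?_
    by_cases hwv : E w v
    · rw [ih (by have := hf w v hwv; omega), zero_mul]
    · rw [hΛ w v hwv, mul_zero]

lemma pow_card_eq_zero (hE : Acyclic E) (hΛ : SupportedOn E Λ) :
    Λ ^ Fintype.card V = 0 := by
  obtain ⟨f, hf, hcard⟩ := hE.exists_rank
  ext u v
  exact hΛ.pow_apply_eq_zero_of_lt hf (by have := hcard v; omega)

lemma inv_one_sub_eq_sum (hE : Acyclic E) (hΛ : SupportedOn E Λ) :
    (1 - Λ)⁻¹ = ∑ k ∈ range (Fintype.card V), Λ ^ k :=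
  Matrix.inv_eq_right_inv (by rw [mul_neg_geom_sum, hΛ.pow_card_eq_zero hE, sub_zero])

lemma isUnit_one_sub (hE : Acyclic E) (hΛ : SupportedOn E Λ) : IsUnit (1 - Λ) :=
  IsNilpotent.isUnit_one_sub ⟨_, hΛ.pow_card_eq_zero hE⟩

lemma inv_one_sub_mul_self (hE : Acyclic E) (hΛ : SupportedOn E Λ) :
    (1 - Λ)⁻¹ * (1 - Λ) = 1 :=
  Matrix.nonsing_inv_mul _ <| (Matrix.isUnit_iff_isUnit_det _).mp (hΛ.isUnit_one_sub hE)

lemma inv_one_sub_apply_self (hE : Acyclic E) (hΛ : SupportedOn E Λ) (v : V) :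
    (1 - Λ)⁻¹ v v = 1 := by
  obtain ⟨f, hf, hcard⟩ := hE.exists_rank
  rw [hΛ.inv_one_sub_eq_sum hE, Matrix.sum_apply,
    sum_eq_single_of_mem 0 (mem_range.mpr (by have := hcard v; omega))]
  · simp
  · exact fun k _ hk => hΛ.pow_apply_eq_zero_of_lt hf (by omega)

lemma inv_one_sub_apply_eq_zero_of_edge (hE : Acyclic E) (hΛ : SupportedOn E Λ) {a v : V}
    (hav : E a v) : (1 - Λ)⁻¹ v a = 0 := by
  obtain ⟨f, hf, -⟩ := hE.exists_rank
  rw [hΛ.inv_one_sub_eq_sum hE, Matrix.sum_apply]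
  exact sum_eq_zero fun k _ => hΛ.pow_apply_eq_zero_of_lt hf (by have := hf a v hav; omega)

lemma cov_sub_sum_parents_eq [DecidableRel E] (hE : Acyclic E) (hΛ : SupportedOn E Λ)
    {Ω S : Matrix V V ℝ} (hΩ : Ω.IsDiag) (hS : S = ((1 - Λ)⁻¹)ᵀ * Ω * (1 - Λ)⁻¹) (v a : V) :
    S v a - ∑ w : {x // E x v}, Λ w v * S w a = Ω v v * (1 - Λ)⁻¹ v a := by
  have hreg : (1 - Λ)ᵀ * S = Ω * (1 - Λ)⁻¹ := by
    rw [hS, ← mul_assoc, ← mul_assoc, ← Matrix.transpose_mul, hΛ.inv_one_sub_mul_self hE,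
      Matrix.transpose_one, one_mul]
  have hnonparents : ∑ w : {x // ¬E x v}, Λ w v * S w a = 0 :=
    sum_eq_zero fun w _ => by rw [hΛ w v w.2, zero_mul]
  have := congrFun (congrFun hreg v) a
  rw [Matrix.transpose_sub, Matrix.transpose_one, sub_mul, one_mul, Matrix.sub_apply,
    Matrix.mul_apply, Matrix.mul_apply] at this
  simp only [Matrix.transpose_apply] at this
  rwa [← Fintype.sum_subtype_add_sum_subtype (E · v), hnonparents, add_zero,
    Fintype.sum_eq_single v fun w hw => by rw [hΩ hw.symm, zero_mul]] at this

lemma vecMul_submatrix_parents [DecidableRel E] (hE : Acyclic E) (hΛ : SupportedOn E Λ)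
    {Ω S : Matrix V V ℝ} (hΩ : Ω.IsDiag) (hS : S = ((1 - Λ)⁻¹)ᵀ * Ω * (1 - Λ)⁻¹) (v : V) :
    Matrix.vecMul (fun w : {x // E x v} => Λ w v) (S.submatrix Subtype.val Subtype.val) =
      fun a : {x // E x v} => S v a := by
  funext a
  have h := hΛ.cov_sub_sum_parents_eq hE hΩ hS v a
  rw [hΛ.inv_one_sub_apply_eq_zero_of_edge hE a.2, mul_zero, sub_eq_zero] at h
  exact h.symm

lemma parent_coeffs_eq_vecMul_inv [DecidableRel E] (hE : Acyclic E) (hΛ : SupportedOn E Λ)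
    {Ω S : Matrix V V ℝ} (hΩ : Ω.IsDiag) (hS : S = ((1 - Λ)⁻¹)ᵀ * Ω * (1 - Λ)⁻¹)
    (hSpos : S.PosDef) (v : V) :
    (fun w : {x // E x v} => Λ w v) =
      Matrix.vecMul (fun a => S v a.1)
        (S.submatrix (Subtype.val : {x // E x v} → V) Subtype.val)⁻¹ := by
  have hP := (Matrix.isUnit_iff_isUnit_det _).mp
    (hSpos.submatrix (Subtype.val_injective (p := (E · v)))).isUnit
  rw [← hΛ.vecMul_submatrix_parents hE hΩ hS v, Matrix.vecMul_vecMul, Matrix.mul_nonsing_inv _ hP,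
    Matrix.vecMul_one]

end SupportedOn

lemma Matrix.PosDef.transpose_mul_mul_of_isUnit {n : Type} [Fintype n] [DecidableEq n]
    {A N : Matrix n n ℝ} (hA : A.PosDef) (hN : IsUnit N) : (Nᵀ * A * N).PosDef := by
  simpa [Matrix.star_eq_conjTranspose] using
    (Matrix.IsUnit.posDef_star_left_conjugate_iff hN).mpr hA

theorem stmt1 {V : Type} [Fintype V] [DecidableEq V] (E : V → V → Prop)
    [DecidableRel E] (hE : Acyclic E) (Λ Ω S : Matrix V V ℝ)
    (hΛ : SupportedOn E Λ) (hΩd : Ω.IsDiag) (hΩp : ∀ v, 0 < Ω v v)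
    (hS : S = ((1 - Λ)⁻¹)ᵀ * Ω * (1 - Λ)⁻¹) :
    (∀ u v, ∀ h : E u v,
        Λ u v = ∑ w : {x // E x v},
          S v w.1 * (Matrix.of fun a b : {x // E x v} => S a.1 b.1)⁻¹ w ⟨u, h⟩) ∧
    (∀ v, Ω v v = S v v - ∑ w : {x // E x v}, ∑ w' : {x // E x v},
          S v w.1 * (Matrix.of fun a b : {x // E x v} => S a.1 b.1)⁻¹ w w' * S w'.1 v) := by
  have hΩpos : Ω.PosDef := hΩd.diagonal_diag ▸ Matrix.PosDef.diagonal hΩp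
  have hSpos : S.PosDef := hS ▸ hΩpos.transpose_mul_mul_of_isUnit
    ((Matrix.isUnit_nonsing_inv_iff).mpr (hΛ.isUnit_one_sub hE))
  have hcoeff := hΛ.parent_coeffs_eq_vecMul_inv hE hΩd hS hSpos
  refine ⟨fun u v h => congrFun (hcoeff v) ⟨u, h⟩, fun v => ?_⟩
  have hω := hΛ.cov_sub_sum_parents_eq hE hΩd hS v v
  rw [hΛ.inv_one_sub_apply_self hE, mul_one] at hω
  rw [← hω]
  congr 1
  change (fun w : {x // E x v} => Λ w v) ⬝ᵥ (fun w => S w v) = _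
  rw [hcoeff v, ← Matrix.dotProduct_mulVec]
  simp only [dotProduct, Matrix.mulVec, mul_sum, mul_assoc]
  rfl
end

section
/- Trek rule: Let D = (V,E) be an acyclic digraph, Λ ∈ ℝ^E, and Ω diagonal with positive entries ω_{vv}. Then the covariance matrix Σ = (I-Λ)^{-T} Ω (I-Λ)^{-1} satisfies σ_{uv} = Σ_{τ ∈ T(u,v)} σ(τ), where T(u,v) is the (finite) set of treks from u to v, and for a trek τ with top node t, σ(τ) = ω_{tt} · Π_{x→y ∈ τ} λ_{xy}. -/
open Matrix BigOperators

/-!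
Because `E` is acyclic, a directed path visits each vertex at most once, so for every `t, u`
the path sum `P t u = ∑_{paths t → u} ∏ λ` is a finite sum. Splitting off the first edge of a
path gives `P = 1 + Λ * P`, i.e. `P = (1 - Λ)⁻¹`. A trek from `u` to `v` is the same as a top
node `t` together with a path `t → u` and a path `t → v`, so the trek sum is
`∑ t, ω t t * P t u * P t v`, which is the `(u, v)` entry of `(1 - Λ)⁻ᵀ Ω (1 - Λ)⁻¹` for
diagonal `Ω`.
-/

lemma transpose_mul_diag_mul_apply {n R : Type*} [Fintype n] [CommSemiring R]
    {Ω : Matrix n n R} (hΩ : Ω.IsDiag) (A : Matrix n n R) (u v : n) :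
    (Aᵀ * Ω * A) u v = ∑ t, Ω t t * A t u * A t v := by
  simp only [mul_apply, transpose_apply, Finset.sum_mul]
  refine Finset.sum_congr rfl fun t _ => ?_
  rw [Finset.sum_eq_single t (fun s _ hst => by rw [hΩ hst, mul_zero, zero_mul]) (by simp)]
  ring

section TrekRule

variable {V : Type} {E : V → V → Prop}

lemma Acyclic.nodup_of_isChain (hE : Acyclic E) {l : List V} (hl : l.IsChain E) : l.Nodup :=
  (List.isChain_iff_pairwise.mp (hl.imp fun _ _ => Relation.TransGen.single)).imp
    fun {a b} (h : Relation.TransGen E a b) (he : a = b) => hE b (he ▸ h)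

lemma edgeProd_cons_of_head? (Λ : Matrix V V ℝ) {t s : V} {l : List V} (hl : l.head? = some s) :
    edgeProd Λ (t :: l) = Λ t s * edgeProd Λ l := by
  obtain ⟨l, rfl⟩ := List.head?_eq_some_iff.1 hl
  simp [edgeProd]

/-- Directed paths from `t` to `u` as vertex lists, including the one-vertex path `[t]` when `t = u`. -/
def PathSet (E : V → V → Prop) (t u : V) : Set (List V) :=
  {l | l.head? = some t ∧ l.getLast? = some u ∧ l.IsChain E}

lemma ne_nil_of_mem_pathSet {t u : V} {l : List V} (hl : l ∈ PathSet E t u) : l ≠ [] := by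
  rintro rfl
  simp [PathSet] at hl

lemma head_of_mem_pathSet {t u : V} {l : List V} (hl : l ∈ PathSet E t u) :
    l.head (ne_nil_of_mem_pathSet hl) = t :=
  (List.head_eq_iff_head?_eq_some _).2 hl.1

lemma getLast_of_mem_pathSet {t u : V} {l : List V} (hl : l ∈ PathSet E t u) :
    l.getLast (ne_nil_of_mem_pathSet hl) = u :=
  (List.getLast_eq_iff_getLast?_eq_some _).2 hl.2.1

lemma pathSet_eq_union (t u : V) :
    PathSet E t u = {l | l = [t] ∧ t = u} ∪ ⋃ s ∈ {s | E t s}, List.cons t '' PathSet E s u := by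
  ext (_ | ⟨a, _ | ⟨b, l⟩⟩) <;> simp [PathSet, List.isChain_cons_cons] <;> aesop

def Trek.equivSigmaPathSet (E : V → V → Prop) (u v : V) :
    Trek E u v ≃ Σ t : V, PathSet E t u × PathSet E t v where
  toFun τ := ⟨τ.top,
    ⟨τ.left, (List.head_eq_iff_head?_eq_some _).1 rfl,
      (List.getLast_eq_iff_getLast?_eq_some _).1 τ.last_left, τ.chain_left⟩,
    ⟨τ.right, (List.head_eq_iff_head?_eq_some _).1 τ.top_eq.symm,
      (List.getLast_eq_iff_getLast?_eq_some _).1 τ.last_right, τ.chain_right⟩⟩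
  invFun
    | ⟨_, ⟨l, hl⟩, ⟨r, hr⟩⟩ =>
      { left := l
        right := r
        left_ne := ne_nil_of_mem_pathSet hl
        right_ne := ne_nil_of_mem_pathSet hr
        top_eq := (head_of_mem_pathSet hl).trans (head_of_mem_pathSet hr).symm
        chain_left := hl.2.2
        chain_right := hr.2.2
        last_left := getLast_of_mem_pathSet hl
        last_right := getLast_of_mem_pathSet hr }
  left_inv _ := rfl
  right_inv
    | ⟨_, ⟨_, hl⟩, ⟨_, _⟩⟩ => by
      have hne := ne_nil_of_mem_pathSet hl
      obtain rfl : _ = _ := (List.head_eq_iff_head?_eq_some hne).2 hl.1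
      rfl

lemma Trek.mono_equivSigmaPathSet_symm (Λ Ω : Matrix V V ℝ) {u v t : V}
    (l : PathSet E t u) (r : PathSet E t v) :
    ((Trek.equivSigmaPathSet E u v).symm ⟨t, l, r⟩).mono Λ Ω =
      Ω t t * edgeProd Λ l * edgeProd Λ r := by
  obtain ⟨l, hl⟩ := l
  exact congrArg (fun t => Ω t t * edgeProd Λ l * edgeProd Λ r) (head_of_mem_pathSet hl)

noncomputable def pathSum (E : V → V → Prop) (Λ : Matrix V V ℝ) : Matrix V V ℝ :=
  Matrix.of fun t u => ∑ᶠ l ∈ PathSet E t u, edgeProd Λ l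

variable [Fintype V]

lemma Acyclic.finite_pathSet (hE : Acyclic E) (t u : V) : (PathSet E t u).Finite :=
  (List.finite_length_le V (Fintype.card V)).subset fun _ hl =>
    (hE.nodup_of_isChain hl.2.2).length_le_card

lemma Acyclic.finite_trek (hE : Acyclic E) (u v : V) : Finite (Trek E u v) :=
  have := fun t w => (hE.finite_pathSet t w).to_subtype
  .of_equiv _ (Trek.equivSigmaPathSet E u v).symm

lemma Acyclic.finsum_trek_mono (hE : Acyclic E) (Λ Ω : Matrix V V ℝ) (u v : V) :
    ∑ᶠ τ : Trek E u v, τ.mono Λ Ω = ∑ t, Ω t t * pathSum E Λ t u * pathSum E Λ t v := by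
  have := fun t w => (hE.finite_pathSet t w).fintype
  rw [← finsum_comp_equiv (Trek.equivSigmaPathSet E u v).symm, finsum_eq_sum_of_fintype,
    Fintype.sum_sigma]
  refine Finset.sum_congr rfl fun t _ => ?_
  simp only [Trek.mono_equivSigmaPathSet_symm, pathSum, of_apply, ← finsum_set_coe_eq_finsum_mem,
    finsum_eq_sum_of_fintype, Fintype.sum_prod_type]
  rw [← Finset.sum_mul_sum, ← Finset.mul_sum]

variable [DecidableEq V]

lemma Acyclic.pathSum_eq_one_add_mul (hE : Acyclic E) {Λ : Matrix V V ℝ}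
    (hΛ : SupportedOn E Λ) : pathSum E Λ = 1 + Λ * pathSum E Λ := by
  ext t u
  have hfin := hE.finite_pathSet t u
  rw [pathSet_eq_union] at hfin
  have hdisj : Disjoint {l | l = [t] ∧ t = u} (⋃ s ∈ {s | E t s}, List.cons t '' PathSet E s u) := by
    refine Set.disjoint_left.2 ?_
    rintro _ ⟨rfl, -⟩ h
    simp [PathSet] at h
  have hdisj' : ({s | E t s} : Set V).PairwiseDisjoint fun s => List.cons t '' PathSet E s u := by
    rintro s - s' - hss'
    refine Set.disjoint_left.2 ?_
    rintro _ ⟨l, hl, rfl⟩ ⟨l', hl', hll'⟩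
    obtain rfl := List.cons_injective hll'
    exact hss' (Option.some_injective _ (hl.1.symm.trans hl'.1))
  rw [pathSum, of_apply, pathSet_eq_union,
    finsum_mem_union hdisj (hfin.subset Set.subset_union_left) (hfin.subset Set.subset_union_right),
    finsum_mem_biUnion hdisj' (Set.toFinite _) fun s _ => (hE.finite_pathSet s u).image _]
  congr 1
  · by_cases htu : t = u <;> simp [htu, one_apply, edgeProd]
  calc ∑ᶠ s ∈ {s | E t s}, ∑ᶠ l ∈ List.cons t '' PathSet E s u, edgeProd Λ l
      = ∑ᶠ s ∈ {s | E t s}, Λ t s * pathSum E Λ s u := by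
        refine finsum_mem_congr rfl fun s _ => ?_
        rw [finsum_mem_image List.cons_injective.injOn, pathSum, of_apply, mul_finsum_mem]
        exact finsum_mem_congr rfl fun l hl => edgeProd_cons_of_head? Λ hl.1
    _ = ∑ s, Λ t s * pathSum E Λ s u := by
        rw [finsum_mem_inter_support_eq' _ _ Set.univ, finsum_mem_univ, finsum_eq_sum_of_fintype]
        exact fun s hs => iff_of_true
          (Classical.byContradiction fun h => hs (mul_eq_zero_of_left (hΛ t s h) _)) trivial
    _ = (Λ * pathSum E Λ) t u := (mul_apply ..).symm

lemma Acyclic.inv_one_sub_eq_pathSum (hE : Acyclic E) {Λ : Matrix V V ℝ}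
    (hΛ : SupportedOn E Λ) : (1 - Λ)⁻¹ = pathSum E Λ :=
  inv_eq_right_inv <| by
    rw [sub_mul, one_mul, sub_eq_iff_eq_add]
    exact hE.pathSum_eq_one_add_mul hΛ

end TrekRule

theorem stmt2_general {V : Type} [Fintype V] [DecidableEq V] (E : V → V → Prop)
    (hE : Acyclic E) (Λ Ω : Matrix V V ℝ)
    (hΛ : SupportedOn E Λ) (hΩd : Ω.IsDiag)
    (S : Matrix V V ℝ) (hS : S = ((1 - Λ)⁻¹)ᵀ * Ω * (1 - Λ)⁻¹) (u v : V) :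
    Finite (Trek E u v) ∧
      S u v = ∑ᶠ τ : Trek E u v, τ.mono Λ Ω := by
  refine ⟨hE.finite_trek u v, ?_⟩
  rw [hS, transpose_mul_diag_mul_apply hΩd, hE.finsum_trek_mono, hE.inv_one_sub_eq_pathSum hΛ]

theorem stmt2 {V : Type} [Fintype V] [DecidableEq V] (E : V → V → Prop)
    (hE : Acyclic E) (Λ Ω : Matrix V V ℝ)
    (hΛ : SupportedOn E Λ) (hΩd : Ω.IsDiag) (hΩp : ∀ v, 0 < Ω v v)
    (S : Matrix V V ℝ) (hS : S = ((1 - Λ)⁻¹)ᵀ * Ω * (1 - Λ)⁻¹) (u v : V) :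
    Finite (Trek E u v) ∧
      S u v = ∑ᶠ τ : Trek E u v, τ.mono Λ Ω :=
  stmt2_general E hE Λ Ω hΛ hΩd S hS u v
end

section
/- Let G = (V,D,B) be an acyclic mixed graph and let D(G) = (U,E) be its clique digraph with U = V ∪ C_2 (C_2 the set of non-singleton cliques of (V,B)). Then for any parameters of the digraph model, the V-marginal covariance matrix satisfies Σ = (I − Γ_{11})^{-T} (Δ_{11} + Γ_{21}^T Δ_{22} Γ_{21}) (I − Γ_{11})^{-1}, where the blocks are with respect to the partition U = V ∪ C_2, and the matrix Δ_{11} + Γ_{21}^T Δ_{22} Γ_{21} belongs to PD(B), i.e., is positive definite with zero entries at non-adjacent pairs of (V,B). -/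
/-!
Ordering `U` as `V` followed by `C₂`, the matrix `1 - Γ` is block lower triangular with identity
clique block, so its inverse has blocks `(1 - Γ₁₁)⁻¹` and `Γ₂₁ (1 - Γ₁₁)⁻¹`, and block
multiplication gives the `V`-block of the covariance. The middle factor is a positive diagonal
matrix plus the positive semidefinite `Γ₂₁ᵀ Δ₂₂ Γ₂₁`, whose `(u, v)` entry
`∑ h, Γ₂₁ h u * Δ₂₂ h h * Γ₂₁ h v` vanishes unless `u` and `v` lie in a common clique.
-/

open Matrix BigOperators

def CliqueType {V : Type} [DecidableEq V] (B : SimpleGraph V) : Type :=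
  {s : Finset V // B.IsClique ↑s ∧ 2 ≤ s.card}

noncomputable instance {V : Type} [Fintype V] [DecidableEq V] (B : SimpleGraph V) :
    Fintype (CliqueType B) := by
  classical
  unfold CliqueType
  infer_instance

instance {V : Type} [DecidableEq V] (B : SimpleGraph V) :
    DecidableEq (CliqueType B) := by
  unfold CliqueType
  infer_instance

namespace Matrix

variable {m n α : Type*} [DecidableEq m] [DecidableEq n] [CommRing α]

theorem one_sub_fromBlocks_zero (A : Matrix m m α) (C : Matrix n m α) :
    1 - fromBlocks A 0 C (0 : Matrix n n α) = fromBlocks (1 - A) 0 (-C) 1 := by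
  rw [← fromBlocks_one, sub_eq_add_neg, fromBlocks_neg, fromBlocks_add]
  simp [sub_eq_add_neg]

section Inverse

variable [Fintype m] [Fintype n]

theorem inv_one_sub_fromBlocks_zero (A : Matrix m m α) (C : Matrix n m α)
    (hA : IsUnit (1 - A)) :
    (1 - fromBlocks A 0 C (0 : Matrix n n α))⁻¹ = fromBlocks (1 - A)⁻¹ 0 (C * (1 - A)⁻¹) 1 := by
  rw [one_sub_fromBlocks_zero,
    inv_fromBlocks_zero₁₂_of_isUnit_iff _ _ _ (iff_of_true hA isUnit_one)]
  simp [Matrix.neg_mul]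

theorem inv_one_sub_fromBlocks_zero_of_not_isUnit (A : Matrix m m α) (C : Matrix n m α)
    (hA : ¬IsUnit (1 - A)) : (1 - fromBlocks A 0 C (0 : Matrix n n α))⁻¹ = 0 := by
  refine (nonsing_inv_eq_ringInverse _).trans (Ring.inverse_non_unit _ ?_)
  rw [one_sub_fromBlocks_zero, isUnit_fromBlocks_zero₁₂]
  exact fun h => hA h.1

/-- When `1 - A` is singular both sides are `0`, since `⁻¹` is the junk-valued nonsingular
inverse. -/
theorem toBlocks₁₁_transpose_inv_mul_fromBlocks_mul_inv (A : Matrix m m α) (C : Matrix n m α)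
    (Δ₁ : Matrix m m α) (Δ₂ : Matrix n n α) :
    (((1 - fromBlocks A 0 C (0 : Matrix n n α))⁻¹)ᵀ * fromBlocks Δ₁ 0 0 Δ₂ *
        (1 - fromBlocks A 0 C (0 : Matrix n n α))⁻¹).toBlocks₁₁ =
      ((1 - A)⁻¹)ᵀ * (Δ₁ + Cᵀ * Δ₂ * C) * (1 - A)⁻¹ := by
  by_cases hA : IsUnit (1 - A)
  · rw [inv_one_sub_fromBlocks_zero A C hA, fromBlocks_transpose, fromBlocks_multiply,
      fromBlocks_multiply, toBlocks_fromBlocks₁₁]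
    simp only [Matrix.mul_zero, add_zero, zero_add, transpose_mul, Matrix.mul_add,
      Matrix.add_mul, Matrix.mul_assoc]
  · rw [inv_one_sub_fromBlocks_zero_of_not_isUnit A C hA, nonsing_inv_eq_ringInverse (1 - A),
      Ring.inverse_non_unit _ hA]
    simp only [transpose_zero, Matrix.zero_mul, Matrix.mul_zero]
    rfl

end Inverse

omit [DecidableEq m] [DecidableEq n] in
theorem IsDiag.transpose_mul_mul_apply [Fintype n] {Δ : Matrix n n α} (hΔ : Δ.IsDiag)
    (C : Matrix n m α) (u v : m) : (Cᵀ * Δ * C) u v = ∑ k, C k u * Δ k k * C k v := by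
  classical
  rw [← hΔ.diagonal_diag]
  simp [mul_apply, diagonal_apply]

end Matrix

theorem Matrix.IsDiag.posDef {n R : Type*} [Fintype n] [CommRing R] [PartialOrder R]
    [StarRing R] [StarOrderedRing R] [NoZeroDivisors R] [Nontrivial R] {A : Matrix n n R}
    (hA : A.IsDiag) (hpos : ∀ i, 0 < A i i) : A.PosDef := by
  classical
  rw [← hA.diagonal_diag]
  exact posDef_diagonal_iff.mpr hpos

theorem Matrix.PosDef.add_transpose_mul_mul {m n R : Type*} [Fintype m] [Fintype n] [CommRing R]
    [PartialOrder R] [StarRing R] [StarOrderedRing R] [TrivialStar R] {A : Matrix m m R}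
    {D : Matrix n n R} (hA : A.PosDef) (hD : D.PosSemidef) (C : Matrix n m R) :
    (A + Cᵀ * D * C).PosDef := by
  simpa [conjTranspose_eq_transpose_of_trivial] using
    hA.add_posSemidef (hD.conjTranspose_mul_mul_same C)

theorem BSupported.add {V : Type} {B : SimpleGraph V} {Ω Ω' : Matrix V V ℝ}
    (hΩ : BSupported B Ω) (hΩ' : BSupported B Ω') : BSupported B (Ω + Ω') :=
  fun u v huv hadj => by rw [Matrix.add_apply, hΩ u v huv hadj, hΩ' u v huv hadj, add_zero]

theorem Matrix.IsDiag.bSupported {V : Type} (B : SimpleGraph V) {Ω : Matrix V V ℝ}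
    (hΩ : Ω.IsDiag) : BSupported B Ω :=
  fun _ _ huv _ => hΩ huv

theorem bSupported_transpose_mul_mul_of_isClique {V K : Type} [Fintype K] {B : SimpleGraph V}
    (s : K → Set V) (hs : ∀ k, B.IsClique (s k)) {Γ : Matrix K V ℝ}
    (hΓ : ∀ k v, v ∉ s k → Γ k v = 0) {Δ : Matrix K K ℝ} (hΔ : Δ.IsDiag) :
    BSupported B (Γᵀ * Δ * Γ) := by
  intro u v huv hadj
  rw [hΔ.transpose_mul_mul_apply]
  refine Finset.sum_eq_zero fun k _ => ?_
  by_cases hu : u ∈ s k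
  · by_cases hv : v ∈ s k
    · exact absurd (hs k hu hv huv) hadj
    · rw [hΓ k v hv, mul_zero]
  · rw [hΓ k u hu, zero_mul, zero_mul]

open scoped Classical in
theorem stmt5_general {V : Type} [Fintype V] [DecidableEq V]
    (B : SimpleGraph V)
    (Γ11 : Matrix V V ℝ)
    (Γ21 : Matrix (CliqueType B) V ℝ) (hΓ21 : ∀ h v, v ∉ h.1 → Γ21 h v = 0)
    (Δ11 : Matrix V V ℝ) (Δ22 : Matrix (CliqueType B) (CliqueType B) ℝ)
    (hΔ11 : Δ11.IsDiag) (hΔ22 : Δ22.IsDiag)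
    (h11p : ∀ v, 0 < Δ11 v v) (h22p : ∀ h, 0 < Δ22 h h)
    (M : Matrix (V ⊕ CliqueType B) (V ⊕ CliqueType B) ℝ)
    (hM : M = ((1 - Matrix.fromBlocks Γ11 0 Γ21 0)⁻¹)ᵀ *
        Matrix.fromBlocks Δ11 0 0 Δ22 * (1 - Matrix.fromBlocks Γ11 0 Γ21 0)⁻¹) :
    (Matrix.of fun u v : V => M (Sum.inl u) (Sum.inl v)) =
      ((1 - Γ11)⁻¹)ᵀ * (Δ11 + Γ21ᵀ * Δ22 * Γ21) * (1 - Γ11)⁻¹ ∧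
    (Δ11 + Γ21ᵀ * Δ22 * Γ21).PosDef ∧
    BSupported B (Δ11 + Γ21ᵀ * Δ22 * Γ21) := by
  subst hM
  refine ⟨toBlocks₁₁_transpose_inv_mul_fromBlocks_mul_inv Γ11 Γ21 Δ11 Δ22, ?_, ?_⟩
  · exact (hΔ11.posDef h11p).add_transpose_mul_mul (hΔ22.posDef h22p).posSemidef Γ21
  · exact (hΔ11.bSupported B).add
      (bSupported_transpose_mul_mul_of_isClique (fun h => ↑h.1) (fun h => h.2.1) hΓ21 hΔ22)

open scoped Classical in
theorem stmt5 {V : Type} [Fintype V] [DecidableEq V] (D : V → V → Prop)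
    (B : SimpleGraph V) (hD : Acyclic D)
    (Γ11 : Matrix V V ℝ) (hΓ11 : SupportedOn D Γ11)
    (Γ21 : Matrix (CliqueType B) V ℝ) (hΓ21 : ∀ h v, v ∉ h.1 → Γ21 h v = 0)
    (Δ11 : Matrix V V ℝ) (Δ22 : Matrix (CliqueType B) (CliqueType B) ℝ)
    (hΔ11 : Δ11.IsDiag) (hΔ22 : Δ22.IsDiag)
    (h11p : ∀ v, 0 < Δ11 v v) (h22p : ∀ h, 0 < Δ22 h h)
    (M : Matrix (V ⊕ CliqueType B) (V ⊕ CliqueType B) ℝ)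
    (hM : M = ((1 - Matrix.fromBlocks Γ11 0 Γ21 0)⁻¹)ᵀ *
        Matrix.fromBlocks Δ11 0 0 Δ22 * (1 - Matrix.fromBlocks Γ11 0 Γ21 0)⁻¹) :
    (Matrix.of fun u v : V => M (Sum.inl u) (Sum.inl v)) =
      ((1 - Γ11)⁻¹)ᵀ * (Δ11 + Γ21ᵀ * Δ22 * Γ21) * (1 - Γ11)⁻¹ ∧
    (Δ11 + Γ21ᵀ * Δ22 * Γ21).PosDef ∧
    BSupported B (Δ11 + Γ21ᵀ * Δ22 * Γ21) :=
  stmt5_general B Γ11 Γ21 hΓ21 Δ11 Δ22 hΔ11 hΔ22 h11p h22p M hM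
end

section
/- Let p ≥ 4 and let B_p be the edge set of the p-cycle on vertices {1,…,p} (i adjacent to j iff |i−j| ∈ {1, p−1}). There exists a positive definite p × p matrix Φ supported on B_p such that the matrix Φ^{(12)}, obtained from Φ by negating the (1,2) and (2,1) entries, is not positive definite. -/
open Matrix BigOperators

/-!
Choose signs `s i = ±1` on the edges `{i, i + 1}` of the cycle and let `Φ` be the Gram matrix of
the vectors `e i + s i • e (i + 1)`, so that `xᵀ Φ x = ∑ i, (x i + s i * x (i + 1)) ^ 2`.
A vector in the kernel satisfies `x (i + 1) = -s i * x i`; going once round the cycle gives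
`x 0 = (∏ i, -s i) * x 0`, so `Φ` is positive definite as soon as the signed cycle is unbalanced,
`∏ i, -s i ≠ 1`. Taking `s 0 = 1` and `s i = -1` otherwise makes it unbalanced, while negating the
`(1, 2)` entry flips `s 0` and turns `Φ` into the Laplacian of the cycle, which kills the all-ones
vector.
-/

open Finset

namespace Fin

variable {p : ℕ} [NeZero p]

open Fin.NatCast

theorem apply_natCast_eq_prod_mul {M : Type*} [CommMonoid M] {x c : Fin p → M}
    (h : ∀ i, x (i + 1) = c i * x i) (k : ℕ) :
    x (k : Fin p) = (∏ j ∈ range k, c (j : Fin p)) * x 0 := by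
  induction k with
  | zero => simp
  | succ k ih => rw [Nat.cast_succ, h, ih, prod_range_succ, mul_comm _ (c k), mul_assoc]

theorem eq_zero_of_apply_add_one_eq_mul {R : Type*} [CommRing R] [NoZeroDivisors R]
    {x c : Fin p → R} (h : ∀ i, x (i + 1) = c i * x i) (hc : ∏ i, c i ≠ 1) : x = 0 := by
  have hx0 : x 0 = 0 := by
    have hloop := apply_natCast_eq_prod_mul h p
    rw [natCast_self, ← prod_univ_eq_prod_range (fun j => c j)] at hloop
    simp only [cast_val_eq_self] at hloop
    have : (∏ i, c i - 1) * x 0 = 0 := by rw [sub_mul, ← hloop]; ring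
    exact (mul_eq_zero.1 this).resolve_left (sub_ne_zero.2 hc)
  funext i
  rw [← cast_val_eq_self i, apply_natCast_eq_prod_mul h, hx0, mul_zero, Pi.zero_apply]

end Fin

theorem cycAdj_iff {p : ℕ} [NeZero p] {i j : Fin p} : cycAdj p i j ↔ j = i + 1 ∨ i = j + 1 := by
  simp [cycAdj, Fin.ext_iff, Fin.val_add, eq_comm]

noncomputable def signedCycleMatrix {p : ℕ} [NeZero p] (s : Fin p → ℝ) : Matrix (Fin p) (Fin p) ℝ :=
  of fun i j => (if i = j then 2 else 0) + (if j = i + 1 then s i else 0) +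
    (if i = j + 1 then s j else 0)

section signedCycleMatrix

variable {p : ℕ} [NeZero p] {s : Fin p → ℝ}

theorem isHermitian_signedCycleMatrix (s : Fin p → ℝ) : (signedCycleMatrix s).IsHermitian :=
  IsHermitian.ext fun i j => by simp only [signedCycleMatrix, of_apply, star_trivial, eq_comm]; ring

theorem signedCycleMatrix_mulVec (s x : Fin p → ℝ) (i : Fin p) :
    (signedCycleMatrix s *ᵥ x) i = 2 * x i + s i * x (i + 1) + s (i - 1) * x (i - 1) := by
  simp only [mulVec, dotProduct, signedCycleMatrix, of_apply, add_mul, ite_mul, zero_mul,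
    sum_add_distrib, eq_comm (a := i) (b := _ + 1), ← eq_sub_iff_add_eq]
  simp

theorem dotProduct_mulVec_signedCycleMatrix (hs : ∀ i, s i ^ 2 = 1) (x : Fin p → ℝ) :
    x ⬝ᵥ (signedCycleMatrix s *ᵥ x) = ∑ i, (x i + s i * x (i + 1)) ^ 2 := by
  have hshift : ∑ i, x i * (s (i - 1) * x (i - 1)) = ∑ i, x (i + 1) * (s i * x i) := by
    rw [← Equiv.sum_comp (Equiv.addRight 1)]
    simp
  have hsq : ∑ i, x (i + 1) ^ 2 = ∑ i, x i ^ 2 := Equiv.sum_comp (Equiv.addRight 1) (x · ^ 2)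
  calc x ⬝ᵥ (signedCycleMatrix s *ᵥ x)
      = ∑ i, x i ^ 2 + ∑ i, 2 * (s i * x i * x (i + 1)) + ∑ i, x (i + 1) ^ 2 := by
        simp only [hsq, dotProduct, signedCycleMatrix_mulVec, mul_add, sum_add_distrib, hshift]
        simp only [← sum_add_distrib]
        exact sum_congr rfl fun i _ => by ring
    _ = ∑ i, (x i + s i * x (i + 1)) ^ 2 := by
        simp only [← sum_add_distrib]
        exact sum_congr rfl fun i _ => by linear_combination -x (i + 1) ^ 2 * hs i

theorem posDef_signedCycleMatrix (hs : ∀ i, s i ^ 2 = 1) (hunbalanced : ∏ i, -s i ≠ 1) :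
    (signedCycleMatrix s).PosDef := by
  refine .of_dotProduct_mulVec_pos (isHermitian_signedCycleMatrix s) fun x hx => ?_
  rw [star_trivial, dotProduct_mulVec_signedCycleMatrix hs]
  refine (sum_nonneg fun i _ => sq_nonneg _).lt_of_ne fun hsum => hx ?_
  have hedge (i : Fin p) : x i + s i * x (i + 1) = 0 :=
    pow_eq_zero_iff two_ne_zero |>.1 <|
      (sum_eq_zero_iff_of_nonneg fun i _ => sq_nonneg _).1 hsum.symm i (mem_univ i)
  refine Fin.eq_zero_of_apply_add_one_eq_mul (fun i => ?_) hunbalanced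
  linear_combination s i * hedge i - x (i + 1) * hs i

theorem not_posDef_signedCycleMatrix_neg_one :
    ¬ (signedCycleMatrix fun _ : Fin p => (-1 : ℝ)).PosDef := fun h => by
  have := h.dotProduct_mulVec_pos (x := 1) one_ne_zero
  rw [star_trivial, dotProduct_mulVec_signedCycleMatrix (by simp)] at this
  simp at this

theorem signedCycleMatrix_update_zero (hp : 3 ≤ p) (s : Fin p → ℝ) :
    signedCycleMatrix (Function.update s 0 (-s 0)) = of fun i j =>
      if (i = 0 ∧ j = 1) ∨ (i = 1 ∧ j = 0) then -signedCycleMatrix s i j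
      else signedCycleMatrix s i j := by
  obtain ⟨h01, h02⟩ : (0 : Fin p) ≠ 1 ∧ (0 : Fin p) ≠ 1 + 1 := by
    simp [Fin.ext_iff, Fin.val_add, Nat.mod_eq_of_lt (show 1 < p by omega),
      Nat.mod_eq_of_lt (show 2 < p by omega)]
  ext i j
  by_cases h : (i = 0 ∧ j = 1) ∨ (i = 1 ∧ j = 0)
  · rcases h with ⟨rfl, rfl⟩ | ⟨rfl, rfl⟩ <;> simp [signedCycleMatrix, h01, h01.symm, h02]
  · simp only [signedCycleMatrix, of_apply, if_neg h, Function.update_apply]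
    grind

end signedCycleMatrix

theorem stmt9 (p : ℕ) (hp : 4 ≤ p) :
    ∃ Φ : Matrix (Fin p) (Fin p) ℝ, Φ.PosDef ∧
      (∀ i j : Fin p, i ≠ j → ¬ cycAdj p i j → Φ i j = 0) ∧
      ¬ (Matrix.of fun i j : Fin p =>
          if (i = ⟨0, by omega⟩ ∧ j = ⟨1, by omega⟩) ∨
             (i = ⟨1, by omega⟩ ∧ j = ⟨0, by omega⟩) then -Φ i j else Φ i j).PosDef := by
  have : NeZero p := ⟨by omega⟩
  set s : Fin p → ℝ := fun i => if i = 0 then 1 else -1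
  have hs (i : Fin p) : s i ^ 2 = 1 := by by_cases i = 0 <;> simp [s, *]
  have hunbalanced : ∏ i, -s i ≠ 1 := by norm_num [s, apply_ite]
  refine ⟨signedCycleMatrix s, posDef_signedCycleMatrix hs hunbalanced,
    fun i j hij hadj => ?_, ?_⟩
  · rw [cycAdj_iff, not_or] at hadj
    simp [signedCycleMatrix, hij, hadj.1, hadj.2]
  · have hflip : Function.update s 0 (-s 0) = fun _ => -1 := by
      funext i; by_cases i = 0 <;> simp [s, *]
    have h1 : (⟨1, by omega⟩ : Fin p) = 1 := (Fin.one_eq_mk_of_lt (by omega)).symm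
    simp only [Fin.mk_zero', h1]
    rw [← signedCycleMatrix_update_zero (by omega), hflip]
    exact not_posDef_signedCycleMatrix_neg_one
end

section
/- In an acyclic digraph D = (U,E) with evidence set A ⊆ U, the set Tops_A(1,2) of top nodes of walks from node 1 to node 2 that are d-connecting given A is ancestral in the induced subgraph D_{U∖A}: if v ∈ Tops_A(1,2) and there is a directed path from u to v avoiding A, then u ∈ Tops_A(1,2). -/
open Matrix BigOperators

/-! If `t` is the top of a d-connecting walk from `n1` to `n2` and `p → t` with `p, t ∉ A`,
splice the detour `t ← p → t` into the walk just before its first forward step (or at its end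
if there is none). The spliced-in occurrences of `p` and `t` are non-colliders outside `A`, so
the walk stays d-connecting, and its top becomes `p`. Induction along the directed path from
`u` to `v` finishes the proof. -/

lemma List.foldl_const_eq_getLast {α β : Type*} (f : α → β) (b : β) {L : List α} (h : L ≠ []) :
    L.foldl (fun _ x => f x) b = f (L.getLast h) := by
  induction L using List.reverseRecOn with
  | nil => exact absurd rfl h
  | append_singleton L x _ => simp

section Detour

variable {U : Type}

def StepAlong (E : U → U → Prop) (s : Bool × U × U) : Prop :=
  (s.1 = true → E s.2.1 s.2.2) ∧ (s.1 = false → E s.2.2 s.2.1)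

def insertDetour (p : U) : U → List (Bool × U × U) → List (Bool × U × U)
  | s, [] => [(false, s, p), (true, p, s)]
  | _, (true, a, c) :: rest => (false, a, p) :: (true, p, a) :: (true, a, c) :: rest
  | _, (false, a, c) :: rest => (false, a, c) :: insertDetour p c rest

variable (p : U)

lemma insertDetour_ne_nil (s : U) (L : List (Bool × U × U)) : insertDetour p s L ≠ [] := by
  rcases L with _ | ⟨⟨_ | _, a, c⟩, rest⟩ <;> simp [insertDetour]

lemma topOf_insertDetour : ∀ (s : U) (L : List (Bool × U × U)), topOf (insertDetour p s L) s = p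
  | _, [] => rfl
  | _, (true, _, _) :: _ => rfl
  | _, (false, _, c) :: rest => topOf_insertDetour c rest

lemma foldl_insertDetour : ∀ (s : U) (L : List (Bool × U × U)),
    (insertDetour p s L).foldl (fun _ x => x.2.2) s = L.foldl (fun _ x => x.2.2) s
  | _, [] => rfl
  | _, (true, _, _) :: _ => rfl
  | _, (false, _, c) :: rest => foldl_insertDetour c rest

lemma head?_insertDetour {s : U} {L : List (Bool × U × U)} (hL : ∀ x ∈ L.head?, x.2.1 = s) :
    ∀ x ∈ (insertDetour p s L).head?, x.2.1 = s := by
  rcases L with _ | ⟨⟨_ | _, a, c⟩, rest⟩ <;> simp_all [insertDetour]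

lemma stepAlong_insertDetour {E : U → U → Prop} :
    ∀ {s : U} {L : List (Bool × U × U)}, (∀ x ∈ L, StepAlong E x) → E p (topOf L s) →
      ∀ x ∈ insertDetour p s L, StepAlong E x
  | _, [], _, hp => by simp [insertDetour, StepAlong, topOf] at hp ⊢; exact hp
  | _, (true, a, c) :: rest, hL, hp => by
    simp only [insertDetour, List.forall_mem_cons] at hL ⊢
    exact ⟨⟨by simp, fun _ => hp⟩, ⟨fun _ => hp, by simp⟩, hL⟩
  | _, (false, a, c) :: rest, hL, hp => by
    simp only [insertDetour, List.forall_mem_cons] at hL ⊢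
    exact ⟨hL.1, stepAlong_insertDetour hL.2 hp⟩

lemma isChain_insertDetour :
    ∀ {s : U} {L : List (Bool × U × U)}, (∀ x ∈ L.head?, x.2.1 = s) →
      L.IsChain (fun x y => x.2.2 = y.2.1) →
      (insertDetour p s L).IsChain (fun x y => x.2.2 = y.2.1)
  | _, [], _, _ => by simp [insertDetour]
  | _, (true, a, c) :: rest, _, hL => by simpa [insertDetour] using hL
  | _, (false, a, c) :: rest, _, hL => by
    rw [List.isChain_cons] at hL
    simp only [insertDetour, List.isChain_cons]
    exact ⟨fun y hy => (head?_insertDetour p (fun x hx => (hL.1 x hx).symm) y hy).symm,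
      isChain_insertDetour (fun x hx => (hL.1 x hx).symm) hL.2⟩

lemma stepPairOK_of_fst_eq_false {A : Set U} {x : Bool × U × U} (hx : x.1 = false)
    (hA : x.2.2 ∉ A) (y : Bool × U × U) : stepPairOK A x y := by
  simp [stepPairOK, hx, hA]

lemma isChain_stepPairOK_insertDetour {A : Set U} (hp : p ∉ A) :
    ∀ {s : U} {L : List (Bool × U × U)}, L.IsChain (stepPairOK A) → topOf L s ∉ A →
      (insertDetour p s L).IsChain (stepPairOK A)
  | _, [], _, ht => by
    simpa [insertDetour, stepPairOK, topOf] using hp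
  | _, (true, a, c) :: rest, hL, ht => by
    simp only [insertDetour, List.isChain_cons_cons]
    exact ⟨stepPairOK_of_fst_eq_false rfl hp _, ⟨by simp, fun _ => ht⟩, hL⟩
  | _, (false, a, c) :: rest, hL, ht => by
    have hc : c ∉ A := by
      rcases rest with _ | ⟨y, rest⟩
      · exact ht
      · exact (List.isChain_cons_cons.mp hL).1.2 (by simp)
    simp only [insertDetour, List.isChain_cons]
    exact ⟨fun y _ => stepPairOK_of_fst_eq_false rfl hc y,
      isChain_stepPairOK_insertDetour hp hL.tail ht⟩

end Detour

namespace DWalk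

variable {U : Type} {E : U → U → Prop} {u v : U}

lemma forall_mem_head?_steps (w : DWalk E u v) : ∀ x ∈ w.steps.head?, x.2.1 = u := by
  intro x hx
  rw [List.head?_eq_some_head w.ne, Option.mem_some_iff] at hx
  exact hx ▸ w.first_eq

def detour (w : DWalk E u v) (p : U) (hp : E p w.top) : DWalk E u v where
  steps := insertDetour p u w.steps
  ne := insertDetour_ne_nil p u w.steps
  first_eq := head?_insertDetour p w.forall_mem_head?_steps _ (List.head_mem_head? _)
  last_eq := by
    have h := foldl_insertDetour p u w.steps
    rw [List.foldl_const_eq_getLast (·.2.2) u (insertDetour_ne_nil p u w.steps),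
      List.foldl_const_eq_getLast (·.2.2) u w.ne] at h
    exact h.trans w.last_eq
  edge := stepAlong_insertDetour p w.edge hp
  chain := isChain_insertDetour p w.forall_mem_head?_steps w.chain

lemma top_detour (w : DWalk E u v) (p : U) (hp : E p w.top) : (w.detour p hp).top = p :=
  topOf_insertDetour p u w.steps

lemma DConn.detour {A : Set U} {w : DWalk E u v} (hw : w.DConn A) {p : U} (hp : E p w.top)
    (hpA : p ∉ A) (htA : w.top ∉ A) : (w.detour p hp).DConn A :=
  isChain_stepPairOK_insertDetour p hpA hw htA

end DWalk

lemma mem_topsA_of_edge {U : Type} {E : U → U → Prop} {A : Set U} {n1 n2 p t : U} (hpt : E p t)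
    (hp : p ∉ A) (ht : t ∉ A) (htops : t ∈ TopsA E A n1 n2) : p ∈ TopsA E A n1 n2 := by
  obtain ⟨w, hw, rfl⟩ := htops
  exact ⟨w.detour p hpt, hw.detour hpt hp ht, w.top_detour p hpt⟩

theorem stmt10_general {U : Type} (E : U → U → Prop) (A : Set U)
    (n1 n2 : U)
    (u v : U) (hv : v ∈ TopsA E A n1 n2)
    (hpath : Relation.ReflTransGen (fun a b => E a b ∧ a ∉ A ∧ b ∉ A) u v) :
    u ∈ TopsA E A n1 n2 := by
  induction hpath using Relation.ReflTransGen.head_induction_on with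
  | refl => exact hv
  | head hstep _ ih => exact mem_topsA_of_edge hstep.1 hstep.2.1 hstep.2.2 ih

theorem stmt10 {U : Type} (E : U → U → Prop) (hE : Acyclic E) (A : Set U)
    (n1 n2 : U) (h1 : n1 ∉ A) (h2 : n2 ∉ A) (h12 : n1 ≠ n2)
    (u v : U) (hv : v ∈ TopsA E A n1 n2)
    (hpath : Relation.ReflTransGen (fun a b => E a b ∧ a ∉ A ∧ b ∉ A) u v) :
    u ∈ TopsA E A n1 n2 :=
  stmt10_general E A n1 n2 u v hv hpath
end
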